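/- arXiv:2506.09813 — 5 statements merged into one kernel-verified Lean document; each statement's English description precedes it below -/
import Mathlib

section
/- Any subset K of the n metrics that satisfies positional representation for group size g must have size at least ⌊n/g⌋. -/
/-- `Ct σ S r a`: number of metrics in `S` that rank alternative `a` in the top `r`
positions, where `σ i` maps each alternative to its (0-indexed) position. -/
def Ct {n m : ℕ} (σ : Fin n → Fin m ≃ Fin m) (S : Finset (Fin n)) (r : ℕ) (a : Fin m) : ℕ :=
  (S.filter fun i => ((σ i) a : ℕ) + 1 ≤ r).card

/-- `K` satisfies positional representation for group size `g`. -/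
def PosRep {n m : ℕ} (σ : Fin n → Fin m ≃ Fin m) (g : ℕ) (K : Finset (Fin n)) : Prop :=
  ∀ r ∈ Finset.Icc 1 m, ∀ a : Fin m, Ct σ Finset.univ r a / g ≤ Ct σ K r a

/-- Any subset `K` satisfying positional representation for group size `g`
has size at least `⌊n / g⌋`. -/
theorem stmt0 {n m g : ℕ} (hm : 0 < m) (hg : 0 < g) (σ : Fin n → Fin m ≃ Fin m)
    (K : Finset (Fin n)) (hK : PosRep σ g K) : n / g ≤ K.card := by
  have a : Fin m := ⟨0, hm⟩
  have h := hK m (Finset.mem_Icc.2 ⟨hm, le_rfl⟩) a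
  have hfull : ∀ S : Finset (Fin n), Ct σ S m a = S.card := by
    intro S
    unfold Ct
    rw [Finset.filter_true_of_mem]
    intro i _
    exact (σ i a).isLt
  rw [hfull, hfull, Finset.card_univ, Fintype.card_fin] at h
  exact h
end

section
/- For every group size g ≥ 2 and appropriate n with n/g ≥ 3 an integer, there exists a preference profile on n metrics and m = 2·binom(n,g) alternatives such that every subset K satisfying positional representation for group size g has |K| ≥ n − g + 1. -/
/-!
For each rank `r` there are two alternatives `a_r, b_r`, and each metric places one of them at
position `r` and the other at position `N + r`: `a_r` first exactly for the metrics of a prescribed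
set `G r`. When `|G r| = g`, positional representation at rank `r + 1` forces `K` to contain one of
the `g` metrics of `G r`. Letting `G` run over all `g`-subsets, `K` meets every `g`-subset of
the `n` metrics, so its complement has fewer than `g` elements.
-/

open Finset

section Hitting

variable {α : Type*} [Fintype α] [DecidableEq α]

theorem Finset.card_compl_lt_of_forall_inter_nonempty {g : ℕ} {K : Finset α}
    (hK : ∀ S : Finset α, #S = g → (K ∩ S).Nonempty) : #Kᶜ < g := by
  by_contra! hle
  obtain ⟨S, hSK, hS⟩ := exists_subset_card_eq hle
  obtain ⟨i, hi⟩ := hK S hS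
  exact mem_compl.mp (hSK (mem_inter.mp hi).2) (mem_inter.mp hi).1

end Hitting

namespace HittingProfile

variable {n N : ℕ}

/-- Alternative `(b, r)` is `a_r` for `b = 0` and `b_r` for `b = 1`; its default position is
`r + N * b`. -/
def alt (b : Fin 2) (r : Fin N) : Fin (2 * N) := finProdFinEquiv (b, r)

def profile (G : Fin N → Finset (Fin n)) (i : Fin n) : Fin (2 * N) ≃ Fin (2 * N) :=
  finProdFinEquiv.permCongr
    (Equiv.prodCongrLeft fun r => if i ∈ G r then Equiv.refl (Fin 2) else Equiv.swap 0 1)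

theorem profile_alt_zero_lt_succ_iff (G : Fin N → Finset (Fin n)) (i : Fin n) (r : Fin N) :
    ((profile G i (alt 0 r) : ℕ) + 1 ≤ r + 1) ↔ i ∈ G r := by
  have hr := r.isLt
  by_cases hi : i ∈ G r <;> simp [profile, alt, hi]
  omega

theorem ct_profile_alt_zero (G : Fin N → Finset (Fin n)) (S : Finset (Fin n)) (r : Fin N) :
    Ct (profile G) S (r + 1) (alt 0 r) = #(S ∩ G r) := by
  simp only [Ct, profile_alt_zero_lt_succ_iff, filter_mem_eq_inter]

theorem inter_nonempty_of_posRep {g : ℕ} (hg : 0 < g) {G : Fin N → Finset (Fin n)}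
    {K : Finset (Fin n)} (hK : PosRep (profile G) g K) (r : Fin N) (hGr : #(G r) = g) :
    (K ∩ G r).Nonempty := by
  have hrank : (r : ℕ) + 1 ∈ Icc 1 (2 * N) := mem_Icc.mpr ⟨by omega, by omega⟩
  have hrep := hK _ hrank (alt 0 r)
  rw [ct_profile_alt_zero, ct_profile_alt_zero, univ_inter, hGr, Nat.div_self hg] at hrep
  exact card_pos.mp hrep

end HittingProfile

open HittingProfile in
theorem stmt4_general {n g : ℕ} (h3 : 3 ≤ n / g) :
    ∃ σ : Fin n → Fin (2 * n.choose g) ≃ Fin (2 * n.choose g),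
      ∀ K : Finset (Fin n), PosRep σ g K → n - g + 1 ≤ K.card := by
  have hg : 0 < g := Nat.pos_of_ne_zero fun h => by simp [h] at h3
  have hgn : g ≤ n := by have := (Nat.le_div_iff_mul_le hg).mp h3; omega
  let E : Fin (n.choose g) ≃ {S : Finset (Fin n) // #S = g} :=
    (Fintype.equivFinOfCardEq (by simp)).symm
  refine ⟨profile fun r => (E r).1, fun K hK => ?_⟩
  have hmeet : ∀ S : Finset (Fin n), #S = g → (K ∩ S).Nonempty := fun S hS => by
    simpa using inter_nonempty_of_posRep hg hK (E.symm ⟨S, hS⟩) (by simpa using hS)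
  have hcompl := card_compl_lt_of_forall_inter_nonempty hmeet
  have hsum := card_add_card_compl K
  simp only [Fintype.card_fin] at hsum
  omega

/-- For every group size `g ≥ 2` and `n` with `g ∣ n` and `n / g ≥ 3`, there is a
preference profile on `n` metrics and `m = 2 * (n choose g)` alternatives such that
every subset `K` satisfying positional representation for group size `g` has
`|K| ≥ n - g + 1`. -/
theorem stmt4 {n g : ℕ} (hg : 2 ≤ g) (hdvd : g ∣ n) (h3 : 3 ≤ n / g) :
    ∃ σ : Fin n → Fin (2 * n.choose g) ≃ Fin (2 * n.choose g),
      ∀ K : Finset (Fin n), PosRep σ g K → n - g + 1 ≤ K.card :=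
  stmt4_general h3
end

section
/- If Q_0 ≤ m·α initially, Q_{t+1} ≤ Q_t·(1 − 1/α) whenever Q_t > α, and Q_{t+1} ≤ Q_t − 1 whenever 0 < Q_t ≤ α, then Q_t = 0 for all t ≥ α + α·log(m), where α ≥ 1. -/
/-! The potential `φ q = q` for `q ≤ α` and `φ q = α + α log (q / α)` for `q ≥ α` bounds the
number of steps left from `q` uncovered colors: a geometric step multiplies `q` by `1 - 1/α`,
which lowers `α log (q / α)` by at least `α log (α / (α - 1)) ≥ 1`, and a linear step lowers
`q` by one. So `φ (Q t)` drops by at least one per step while `Q t ≠ 0`, and it starts below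
`φ (m α) = α + α log m`. -/

open Real

noncomputable def potential (α q : ℝ) : ℝ :=
  if q ≤ α then q else α + α * log (q / α)

section potential

variable {α q q' : ℝ}

lemma potential_of_le (h : q ≤ α) : potential α q = q := if_pos h

lemma potential_of_ge (hα : 0 < α) (h : α ≤ q) : potential α q = α + α * log (q / α) := by
  rcases h.eq_or_lt with rfl | hlt
  · simp [potential, div_self hα.ne']
  · exact if_neg hlt.not_ge

lemma potential_mono (hα : 0 < α) : Monotone (potential α) := by
  intro q q' hqq'
  rcases le_or_gt q' α with hq' | hq'
  · rw [potential_of_le (hqq'.trans hq'), potential_of_le hq']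
    exact hqq'
  · have hlog : 0 ≤ log (q' / α) := log_nonneg ((one_le_div hα).2 hq'.le)
    rw [potential_of_ge hα hq'.le]
    rcases le_or_gt q α with hq | hq
    · rw [potential_of_le hq]
      nlinarith
    · rw [potential_of_ge hα hq.le]
      gcongr
      exact div_pos (hα.trans hq) hα

lemma potential_pos (hα : 0 < α) (hq : 0 < q) : 0 < potential α q := by
  rcases le_or_gt q α with h | h
  · rwa [potential_of_le h]
  · rw [potential_of_ge hα h.le]
    have : 0 ≤ log (q / α) := log_nonneg ((one_le_div hα).2 h.le)
    positivity

lemma potential_add_one_le_of_le (hq : q ≤ α) (hq' : q' + 1 ≤ q) :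
    potential α q' + 1 ≤ potential α q := by
  rwa [potential_of_le hq, potential_of_le (by linarith)]

lemma potential_mul_one_sub_inv_add_one_le (hα : 1 ≤ α) (hq : α < q) :
    potential α (q * (1 - α⁻¹)) + 1 ≤ potential α q := by
  have hα0 : 0 < α := by linarith
  rw [potential_of_ge hα0 hq.le]
  rcases le_or_gt (q * (1 - α⁻¹)) α with hr | hr
  · -- with `x = q / α`, `x log x ≥ x - 1` suffices since the case hypothesis reads `(α - 1) x ≤ α`
    set x := q / α with hx
    have hqx : q = α * x := by rw [hx]; field_simp
    have hx1 : 1 < x := (one_lt_div hα0).2 hq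
    have hlog : x - 1 ≤ x * log x := by
      have := mul_le_mul_of_nonneg_left (one_sub_inv_le_log_of_pos (by linarith : 0 < x))
        (by linarith : 0 ≤ x)
      rwa [mul_sub, mul_one, mul_inv_cancel₀ (by linarith)] at this
    have hr_eq : q * (1 - α⁻¹) = α * x - x := by rw [hqx]; field_simp
    rw [hr_eq] at hr ⊢
    rw [potential_of_le hr]
    nlinarith [mul_le_mul_of_nonneg_left hlog hα0.le,
      mul_nonneg (by linarith : 0 ≤ x - 1) (by linarith : 0 ≤ α - (α * x - x))]
  · have hfac : 0 < 1 - α⁻¹ := pos_of_mul_pos_right (hα0.trans hr) (hα0.trans hq).le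
    have hlog : log (1 - α⁻¹) ≤ -α⁻¹ := by linarith [log_le_sub_one_of_pos hfac]
    rw [potential_of_ge hα0 hr.le, mul_div_right_comm,
      log_mul (div_pos (hα0.trans hq) hα0).ne' hfac.ne']
    have : α * log (1 - α⁻¹) ≤ -1 := by
      have := mul_le_mul_of_nonneg_left hlog hα0.le
      rwa [mul_neg, mul_inv_cancel₀ hα0.ne'] at this
    linarith

end potential

lemma natCast_add_le_of_add_one_le {f : ℕ → ℝ} {P : ℕ → Prop} (hP : ∀ n, P (n + 1) → P n)
    (hf : ∀ n, P n → f (n + 1) + 1 ≤ f n) : ∀ n, P n → (n : ℝ) + f n ≤ f 0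
  | 0, _ => by simp
  | n + 1, h => by
    have := natCast_add_le_of_add_one_le hP hf n (hP n h)
    push_cast
    linarith [hf n (hP n h)]

/-- If the number `Q t` of uncovered colors satisfies `Q 0 ≤ m * α`, decays
geometrically (`Q (t+1) ≤ Q t * (1 - 1/α)`) whenever `Q t > α`, and decreases by at
least one whenever `0 < Q t ≤ α`, then `Q t = 0` for all `t ≥ α + α * log m`. -/
theorem stmt7 (Q : ℕ → ℕ) (α m : ℝ) (hα : 1 ≤ α) (hm : 1 ≤ m)
    (h0 : (Q 0 : ℝ) ≤ m * α)
    (hgeo : ∀ t, α < (Q t : ℝ) → (Q (t + 1) : ℝ) ≤ (Q t : ℝ) * (1 - 1 / α))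
    (hlin : ∀ t, 0 < Q t → (Q t : ℝ) ≤ α → Q (t + 1) ≤ Q t - 1)
    (hzero : ∀ t, Q t = 0 → Q (t + 1) = 0) :
    ∀ t : ℕ, α + α * Real.log m ≤ t → Q t = 0 := by
  have hα0 : 0 < α := by linarith
  have step : ∀ t, Q t ≠ 0 → potential α (Q (t + 1)) + 1 ≤ potential α (Q t) := by
    intro t ht
    rcases le_or_gt (Q t : ℝ) α with hle | hlt
    · have : Q (t + 1) + 1 ≤ Q t := by have := hlin t (Nat.pos_of_ne_zero ht) hle; omega
      exact potential_add_one_le_of_le hle (by exact_mod_cast this)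
    · have hgeo' := hgeo t hlt
      rw [one_div] at hgeo'
      linarith [potential_mono hα0 hgeo', potential_mul_one_sub_inv_add_one_le hα hlt]
  have hstart : potential α (Q 0) ≤ α + α * log m := by
    calc potential α (Q 0) ≤ potential α (m * α) := potential_mono hα0 h0
      _ = α + α * log m := by
        rw [potential_of_ge hα0 (le_mul_of_one_le_left hα0.le hm), mul_div_cancel_right₀ m hα0.ne']
  intro t ht
  by_contra hQ
  have hdescent := natCast_add_le_of_add_one_le (f := fun n => potential α (Q n))
    (P := fun n => Q n ≠ 0) (fun n h hn => h (hzero n hn)) step t hQ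
  have hpos := potential_pos hα0 (Nat.cast_pos.2 (Nat.pos_of_ne_zero hQ))
  linarith
end

section
/- Hoeffding's inequality for sampling without replacement: let x_1,...,x_N be real numbers with a = min x_i, b = max x_i, and μ = (1/N)·Σ x_i. If X_1,...,X_n is a uniformly random sample of size n drawn without replacement from {x_1,...,x_N}, then for all ε > 0, Pr(|(1/n)·Σ_{i=1}^n X_i − μ| ≥ ε) ≤ 2·exp(−2nε²/(b−a)²). -/
/-!
Condition on the first draw `j`. The centred sum of an ordered sample of size `n + 1` from `s`
splits as `(1 - n / (#s - 1)) * (x j - mean s)` plus the centred sum of a sample of size `n` from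
`s.erase j`. The first term has mean zero over `j ∈ s` and ranges over an interval of length at
most `b - a`, so Hoeffding's lemma bounds the average of its exponential by `exp (λ²(b - a)²/8)`;
by induction the average of `exp (λ * centred sum)` over all samples is at most
`exp (n λ²(b - a)²/8)`. Markov's inequality with `λ = ±4ε/(b - a)²` gives each one-sided tail
bound `exp (-2nε²/(b - a)²)`.
-/

open Finset Real MeasureTheory ProbabilityTheory
open scoped Classical
open scoped ENNReal

theorem sum_exp_mul_sub_mean_le {ι : Type*} {s : Finset ι} {x : ι → ℝ} {a b : ℝ}
    (hx : ∀ j ∈ s, x j ∈ Set.Icc a b) (l : ℝ) :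
    ∑ j ∈ s, exp (l * (x j - (∑ k ∈ s, x k) / #s)) ≤ #s * exp (l ^ 2 * (b - a) ^ 2 / 8) := by
  rcases s.eq_empty_or_nonempty with rfl | hs
  · simp
  have hcard : (#s : ℝ≥0∞) ≠ 0 := by simp [hs.ne_empty]
  set μ : Measure ℝ := ∑ j ∈ s, (#s : ℝ≥0∞)⁻¹ • Measure.dirac (x j)
  have hμ : ∀ f : ℝ → ℝ, ∫ y, f y ∂μ = (#s : ℝ)⁻¹ * ∑ j ∈ s, f (x j) := by
    intro f
    rw [integral_finsetSum_measure fun j _ =>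
      (integrable_dirac (by simp)).smul_measure (by simp [hs.ne_empty])]
    simp [integral_smul_measure, Finset.mul_sum]
  have : IsProbabilityMeasure μ := ⟨by simp [μ, ENNReal.mul_inv_cancel hcard (by simp)]⟩
  have hIcc : ∀ᵐ y ∂μ, y ∈ Set.Icc a b := by
    rw [ae_iff]
    simpa [μ] using hx
  have hmean : μ[id] = (∑ k ∈ s, x k) / #s := by simp [hμ, inv_mul_eq_div]
  have hoeffding := (hasSubgaussianMGF_of_mem_Icc aemeasurable_id hIcc).mgf_le l
  rw [mgf, hμ, hmean, inv_mul_le_iff₀ (by positivity)] at hoeffding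
  refine hoeffding.trans_eq ?_
  simp only [NNReal.coe_pow, NNReal.coe_div, coe_nnnorm, Real.norm_eq_abs, NNReal.coe_ofNat,
    div_pow, sq_abs]
  congr 2
  ring

theorem card_filter_mul_exp_le_sum_exp {α : Type*} (T : Finset α) (F : α → ℝ) (t : ℝ) :
    #{f ∈ T | t ≤ F f} * exp t ≤ ∑ f ∈ T, exp (F f) :=
  calc #{f ∈ T | t ≤ F f} * exp t = ∑ f ∈ T with t ≤ F f, exp t := by
        rw [sum_const, nsmul_eq_mul]
    _ ≤ ∑ f ∈ T with t ≤ F f, exp (F f) :=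
        sum_le_sum fun f hf => exp_le_exp.2 (mem_filter.1 hf).2
    _ ≤ ∑ f ∈ T, exp (F f) :=
        sum_le_sum_of_subset_of_nonneg (filter_subset _ _) fun _ _ _ => (exp_pos _).le

theorem sum_cons_sub_mul_mean {ι : Type*} [DecidableEq ι] {s : Finset ι} {j : ι} (hj : j ∈ s)
    {n : ℕ} (hn : n + 1 ≤ #s) (x : ι → ℝ) (f : Fin n → ι) :
    ∑ i, x ((Fin.cons j f : Fin (n + 1) → ι) i) - (n + 1 : ℕ) * ((∑ k ∈ s, x k) / #s) =
      (1 - n / (#s - 1 : ℝ)) * (x j - (∑ k ∈ s, x k) / #s) +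
        (∑ i, x (f i) - n * ((∑ k ∈ s.erase j, x k) / #(s.erase j))) := by
  have hs : (#s : ℝ) ≠ 0 := by norm_cast; omega
  rw [Fin.sum_univ_succ, sum_erase_eq_sub hj, card_erase_of_mem hj,
    Nat.cast_sub (by omega : 1 ≤ #s)]
  simp only [Fin.cons_zero, Fin.cons_succ]
  push_cast
  rcases Nat.eq_zero_or_pos n with rfl | hn0
  · field_simp
    ring
  · have hs1 : (#s : ℝ) - 1 ≠ 0 := by
      have : (n : ℝ) + 1 ≤ #s := by exact_mod_cast hn
      have : (0 : ℝ) < n := by exact_mod_cast hn0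
      linarith
    field_simp
    ring

section Sampling

variable {ι : Type*} [Fintype ι]

noncomputable def samplesWithoutReplacement (s : Finset ι) (n : ℕ) : Finset (Fin n → ι) :=
  {f | Function.Injective f ∧ ∀ i, f i ∈ s}

theorem mem_samplesWithoutReplacement {s : Finset ι} {n : ℕ} {f : Fin n → ι} :
    f ∈ samplesWithoutReplacement s n ↔ Function.Injective f ∧ ∀ i, f i ∈ s := by
  simp [samplesWithoutReplacement]

theorem sum_embedding_eq_sum_samplesWithoutReplacement {M : Type*} [AddCommMonoid M] (n : ℕ)
    (g : (Fin n → ι) → M) :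
    ∑ f : Fin n ↪ ι, g f = ∑ f ∈ samplesWithoutReplacement univ n, g f := by
  refine sum_bij (fun f _ => ⇑f) (fun f _ => ?_) (fun _ _ _ _ h => DFunLike.coe_injective h)
    (fun f hf => ?_) fun _ _ => rfl
  · simpa [mem_samplesWithoutReplacement] using f.injective
  · exact ⟨⟨f, (mem_samplesWithoutReplacement.1 hf).1⟩, mem_univ _, rfl⟩

variable [DecidableEq ι]

theorem sum_samplesWithoutReplacement_succ {M : Type*} [AddCommMonoid M] (s : Finset ι) (n : ℕ)
    (g : (Fin (n + 1) → ι) → M) :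
    ∑ f ∈ samplesWithoutReplacement s (n + 1), g f =
      ∑ j ∈ s, ∑ f ∈ samplesWithoutReplacement (s.erase j) n, g (Fin.cons j f) := by
  rw [sum_sigma']
  refine sum_nbij' (fun f => ⟨f 0, Fin.tail f⟩) (fun q => Fin.cons q.1 q.2) ?_ ?_
    (fun f _ => Fin.cons_self_tail f) (fun q _ => by simp) (fun f _ => by rw [Fin.cons_self_tail])
  · simp only [mem_samplesWithoutReplacement, mem_sigma, mem_erase, and_imp]
    intro f hinj hmem
    exact ⟨hmem 0, fun i j hij => Fin.succ_injective n (hinj hij),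
      fun i => ⟨fun h => Fin.succ_ne_zero i (hinj h), hmem _⟩⟩
  · simp only [mem_samplesWithoutReplacement, mem_sigma, mem_erase, and_imp]
    rintro ⟨j, f⟩ hj hinj hmem
    exact ⟨Fin.cons_injective_of_injective (fun ⟨i, hi⟩ => (hmem i).1 hi) hinj,
      Fin.cases hj fun i => (hmem i).2⟩

theorem sum_exp_mul_sum_sub_mean_le {s : Finset ι} {x : ι → ℝ} {a b : ℝ}
    (hx : ∀ j ∈ s, x j ∈ Set.Icc a b) (l : ℝ) {n : ℕ} (hn : n ≤ #s) :
    ∑ f ∈ samplesWithoutReplacement s n, exp (l * (∑ i, x (f i) - n * ((∑ j ∈ s, x j) / #s))) ≤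
      (#s).descFactorial n * exp (l ^ 2 * (b - a) ^ 2 / 8) ^ n := by
  induction n generalizing s with
  | zero => simpa using card_le_univ (samplesWithoutReplacement s 0)
  | succ n ih =>
    set t : ℝ := 1 - n / (#s - 1 : ℝ) with ht_def
    have ht : t ^ 2 ≤ 1 := by
      have hn' : (n : ℝ) + 1 ≤ #s := by exact_mod_cast hn
      have h1 : (n : ℝ) / (#s - 1) ≤ 1 := div_le_one_of_le₀ (by linarith) (by linarith)
      have h0 : 0 ≤ (n : ℝ) / (#s - 1) := div_nonneg n.cast_nonneg (by linarith)
      nlinarith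
    have hfirst : ∑ j ∈ s, exp (l * t * (x j - (∑ k ∈ s, x k) / #s)) ≤
        #s * exp (l ^ 2 * (b - a) ^ 2 / 8) := by
      refine (sum_exp_mul_sub_mean_le hx (l * t)).trans ?_
      gcongr _ * exp (?_ * _ / 8)
      rw [mul_pow]
      exact mul_le_of_le_one_right (sq_nonneg l) ht
    have hrest : ∀ j ∈ s,
        ∑ f ∈ samplesWithoutReplacement (s.erase j) n,
            exp (l * (∑ i, x (f i) - n * ((∑ k ∈ s.erase j, x k) / #(s.erase j)))) ≤
          (#s - 1).descFactorial n * exp (l ^ 2 * (b - a) ^ 2 / 8) ^ n := fun j hj =>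
      (ih (fun k hk => hx k (mem_of_mem_erase hk)) (by rw [card_erase_of_mem hj]; omega)).trans_eq
        (by rw [card_erase_of_mem hj])
    calc ∑ f ∈ samplesWithoutReplacement s (n + 1),
          exp (l * (∑ i, x (f i) - (n + 1 : ℕ) * ((∑ j ∈ s, x j) / #s)))
        = ∑ j ∈ s, exp (l * t * (x j - (∑ k ∈ s, x k) / #s)) *
            ∑ f ∈ samplesWithoutReplacement (s.erase j) n,
              exp (l * (∑ i, x (f i) - n * ((∑ k ∈ s.erase j, x k) / #(s.erase j)))) := by
          rw [sum_samplesWithoutReplacement_succ]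
          refine sum_congr rfl fun j hj => ?_
          rw [mul_sum]
          refine sum_congr rfl fun f _ => ?_
          rw [sum_cons_sub_mul_mean hj hn, ← exp_add, ht_def]
          ring_nf
      _ ≤ ∑ j ∈ s, exp (l * t * (x j - (∑ k ∈ s, x k) / #s)) *
            ((#s - 1).descFactorial n * exp (l ^ 2 * (b - a) ^ 2 / 8) ^ n) :=
          sum_le_sum fun j hj => by gcongr; exact hrest j hj
      _ ≤ #s * exp (l ^ 2 * (b - a) ^ 2 / 8) *
            ((#s - 1).descFactorial n * exp (l ^ 2 * (b - a) ^ 2 / 8) ^ n) := by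
          rw [← sum_mul]
          gcongr
      _ = (#s).descFactorial (n + 1) * exp (l ^ 2 * (b - a) ^ 2 / 8) ^ (n + 1) := by
          obtain ⟨m, hm⟩ : ∃ m, #s = m + 1 := ⟨#s - 1, by omega⟩
          rw [hm, Nat.succ_descFactorial_succ, Nat.add_sub_cancel]
          push_cast
          ring

theorem card_embedding_filter_le_mul_sum_sub_mean {x : ι → ℝ} {a b : ℝ}
    (hx : ∀ j, x j ∈ Set.Icc a b) (n : ℕ) (l t : ℝ) :
    (#{f : Fin n ↪ ι | t ≤ l * (∑ i, x (f i) - n * ((∑ j, x j) / Fintype.card ι))} : ℝ) ≤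
      Fintype.card (Fin n ↪ ι) * exp (n * (l ^ 2 * (b - a) ^ 2 / 8) - t) := by
  rcases lt_or_ge (Fintype.card ι) n with hn | hn
  · have : IsEmpty (Fin n ↪ ι) := Function.Embedding.isEmpty_of_card_lt (by simpa using hn)
    simp
  rw [Fintype.card_embedding_eq, Fintype.card_fin, exp_sub, exp_nat_mul]
  conv_rhs => rw [← mul_div_assoc]
  rw [le_div_iff₀ (exp_pos t)]
  exact (card_filter_mul_exp_le_sum_exp _ _ t).trans
    ((sum_embedding_eq_sum_samplesWithoutReplacement n _).trans_le
      (sum_exp_mul_sum_sub_mean_le (fun j _ => hx j) l (by simpa using hn)))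

theorem card_embedding_filter_le_abs_sub_mean {x : ι → ℝ} {a b : ℝ}
    (hx : ∀ j, x j ∈ Set.Icc a b) {n : ℕ} (hn : 0 < n) {ε : ℝ} (hε : 0 < ε) :
    (#{f : Fin n ↪ ι | ε ≤ |(1 / n) * ∑ i, x (f i) - (1 / Fintype.card ι) * ∑ j, x j|} : ℝ) ≤
      2 * exp (-2 * n * ε ^ 2 / (b - a) ^ 2) * Fintype.card (Fin n ↪ ι) := by
  -- `l` minimises `n * (l ^ 2 * (b - a) ^ 2 / 8) - l * n * ε`.
  set l : ℝ := 4 * ε / (b - a) ^ 2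
  set t : ℝ := 4 * n * ε ^ 2 / (b - a) ^ 2
  set D : (Fin n ↪ ι) → ℝ := fun f => ∑ i, x (f i) - n * ((∑ j, x j) / Fintype.card ι)
  set event : Finset (Fin n ↪ ι) :=
    {f | ε ≤ |(1 / n) * ∑ i, x (f i) - (1 / Fintype.card ι) * ∑ j, x j|}
  set upper : Finset (Fin n ↪ ι) := {f | t ≤ l * D f}
  set lower : Finset (Fin n ↪ ι) := {f | t ≤ -l * D f}
  have hsplit : event ⊆ upper ∪ lower := by
    intro f hf
    simp only [event, upper, lower, mem_filter, mem_univ, true_and, mem_union] at hf ⊢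
    have hD : D f = n * ((1 / n) * ∑ i, x (f i) - (1 / Fintype.card ι) * ∑ j, x j) := by
      change ∑ i, x (f i) - n * ((∑ j, x j) / Fintype.card ι) = _
      field_simp
    have hln : 0 ≤ l * n := by positivity
    have ht : t = l * n * ε := by ring
    rw [hD, ht]
    rcases le_abs.1 hf with h | h
    · exact Or.inl (by linarith [mul_le_mul_of_nonneg_left h hln])
    · exact Or.inr (by linarith [mul_le_mul_of_nonneg_left h hln])
  have hexp : ∀ l' : ℝ, l' ^ 2 = l ^ 2 →
      n * (l' ^ 2 * (b - a) ^ 2 / 8) - t = -2 * n * ε ^ 2 / (b - a) ^ 2 := by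
    intro l' hl'
    rw [hl']
    rcases eq_or_ne (b - a) 0 with h | h
    · simp [l, t, h]
    · simp only [l, t]
      field_simp
      ring
  calc (#event : ℝ) ≤ #upper + #lower := by
        exact_mod_cast (card_le_card hsplit).trans (card_union_le _ _)
    _ ≤ Fintype.card (Fin n ↪ ι) * exp (n * (l ^ 2 * (b - a) ^ 2 / 8) - t) +
          Fintype.card (Fin n ↪ ι) * exp (n * ((-l) ^ 2 * (b - a) ^ 2 / 8) - t) :=
        add_le_add (card_embedding_filter_le_mul_sum_sub_mean hx n l t)
          (card_embedding_filter_le_mul_sum_sub_mean hx n (-l) t)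
    _ = 2 * exp (-2 * n * ε ^ 2 / (b - a) ^ 2) * Fintype.card (Fin n ↪ ι) := by
        rw [hexp l rfl, hexp (-l) (neg_sq l)]
        ring

end Sampling

/-- Hoeffding's inequality for sampling without replacement: if `X_1, ..., X_n` is a
uniformly random sample without replacement (i.e. a uniformly random injection
`f : Fin n ↪ Fin N`) from the list `x_1, ..., x_N` with minimum `a`, maximum `b`, and
mean `μ`, then `Pr(|1/n ∑ X_i - μ| ≥ ε) ≤ 2 exp(-2 n ε² / (b - a)²)`, where the
probability is the fraction of injections realizing the deviation event. -/
theorem stmt9 {N n : ℕ} (hN : 0 < N) (x : Fin N → ℝ) (ε : ℝ) (hε : 0 < ε) :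
    ((Finset.univ.filter fun f : Fin n ↪ Fin N =>
          ε ≤ |(1 / n) * ∑ i, x (f i) - (1 / N) * ∑ j, x j|).card : ℝ) /
        (Fintype.card (Fin n ↪ Fin N)) ≤
      2 * Real.exp (-2 * n * ε ^ 2 /
        ((Finset.univ.sup' ⟨⟨0, hN⟩, Finset.mem_univ _⟩ x -
          Finset.univ.inf' ⟨⟨0, hN⟩, Finset.mem_univ _⟩ x) ^ 2)) := by
  have hx : ∀ j, x j ∈ Set.Icc (univ.inf' ⟨⟨0, hN⟩, mem_univ _⟩ x)
      (univ.sup' ⟨⟨0, hN⟩, mem_univ _⟩ x) :=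
    fun j => ⟨inf'_le _ (mem_univ j), le_sup' _ (mem_univ j)⟩
  rcases Nat.eq_zero_or_pos n with rfl | hn
  · refine (div_le_one_of_le₀ (by exact_mod_cast card_le_univ _) (Nat.cast_nonneg _)).trans ?_
    norm_num
  refine div_le_of_le_mul₀ (Nat.cast_nonneg _) (by positivity) ?_
  simpa using card_embedding_filter_le_abs_sub_mean hx hn hε
end

section
/- If a subset K of metrics satisfies ε-positional proportionality, then for every normalized scoring rule with score vector s (satisfying 1 = s_1 ≥ s_2 ≥ ... ≥ s_m = 0) and every alternative a, the average score of a under K differs from its average score under N by at most ε: |f_s(a,N) − f_s(a,K)| ≤ ε. -/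
/-- `K` satisfies `ε`-positional proportionality. -/
def PosProp {n m : ℕ} (σ : Fin n → Fin m ≃ Fin m) (ε : ℝ) (K : Finset (Fin n)) : Prop :=
  ∀ a : Fin m, ∀ r ∈ Finset.Icc 1 m,
    |(Ct σ Finset.univ r a : ℝ) / n - (Ct σ K r a : ℝ) / K.card| ≤ ε

/-- Telescoping sum over `Icc p q`. -/
lemma tel_sum (f : ℕ → ℝ) (p q : ℕ) (h : p ≤ q + 1) :
    ∑ r ∈ Finset.Icc p q, (f r - f (r + 1)) = f p - f (q + 1) := by
  rw [← Finset.Ico_add_one_right_eq_Icc, Finset.sum_Ico_eq_sum_range]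
  have h2 := Finset.sum_range_sub' (fun j => f (p + j)) (q + 1 - p)
  simp only [← add_assoc, add_zero, Nat.add_sub_cancel' h] at h2
  exact h2

/-- If `K` satisfies `ε`-positional proportionality, then for every normalized
scoring rule `s` (nonincreasing, `s` at the top position is 1, at the bottom
position 0), the average score of any alternative `a` over `K` differs from its
average score over all metrics by at most `ε`. -/
theorem stmt10 {n m : ℕ} (hn : 0 < n) (hm : 0 < m) (σ : Fin n → Fin m ≃ Fin m)
    (K : Finset (Fin n)) (hKne : K.Nonempty) (ε : ℝ) (hK : PosProp σ ε K)
    (s : Fin m → ℝ) (hmono : Antitone s) (htop : s ⟨0, hm⟩ = 1)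
    (hbot : s ⟨m - 1, by omega⟩ = 0) (a : Fin m) :
    |(1 / n) * ∑ i, s (σ i a) - (1 / K.card) * ∑ i ∈ K, s (σ i a)| ≤ ε := by
  classical
  set t : ℕ → ℝ := fun r => if h : 1 ≤ r ∧ r ≤ m then s ⟨r - 1, by omega⟩ else 0 with ht
  have hval : ∀ r (h1 : 1 ≤ r) (h2 : r ≤ m), t r = s ⟨r - 1, by omega⟩ :=
    fun r h1 h2 => dif_pos ⟨h1, h2⟩
  have htm1 : t (m + 1) = 0 := dif_neg (by omega)
  have ht1 : t 1 = 1 := by rw [hval 1 le_rfl hm]; exact htop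
  have hd : ∀ r ∈ Finset.Icc 1 m, 0 ≤ t r - t (r + 1) := by
    intro r hr
    simp only [Finset.mem_Icc] at hr
    rcases eq_or_lt_of_le hr.2 with h | h
    · subst h
      rw [htm1, sub_zero, hval r hr.1 le_rfl]
      rw [show s ⟨r - 1, by omega⟩ = 0 from hbot]
    · rw [hval r hr.1 hr.2, hval (r + 1) (by omega) (by omega), sub_nonneg]
      exact hmono (by simp [Fin.le_def])
  have key : ∀ S : Finset (Fin n),
      ∑ i ∈ S, s (σ i a) = ∑ r ∈ Finset.Icc 1 m, (Ct σ S r a : ℝ) * (t r - t (r + 1)) := by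
    intro S
    have h1 : ∀ i : Fin n, s (σ i a) =
        ∑ r ∈ Finset.Icc 1 m, if ((σ i a : ℕ) + 1) ≤ r then t r - t (r + 1) else 0 := by
      intro i
      have hpm : (σ i a : ℕ) + 1 ≤ m := (σ i a).isLt
      rw [← Finset.sum_filter]
      have hfilt : (Finset.Icc 1 m).filter (fun r => (σ i a : ℕ) + 1 ≤ r)
          = Finset.Icc ((σ i a : ℕ) + 1) m := by
        ext r; simp [Finset.mem_Icc, Finset.mem_filter]; omega
      rw [hfilt, tel_sum t _ _ (by omega), htm1, sub_zero,
        hval _ (by omega) hpm]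
      congr 1
    calc ∑ i ∈ S, s (σ i a)
        = ∑ i ∈ S, ∑ r ∈ Finset.Icc 1 m,
            if ((σ i a : ℕ) + 1) ≤ r then t r - t (r + 1) else 0 :=
          Finset.sum_congr rfl fun i _ => h1 i
      _ = ∑ r ∈ Finset.Icc 1 m, ∑ i ∈ S,
            if ((σ i a : ℕ) + 1) ≤ r then t r - t (r + 1) else 0 := Finset.sum_comm
      _ = ∑ r ∈ Finset.Icc 1 m, (Ct σ S r a : ℝ) * (t r - t (r + 1)) := by
          refine Finset.sum_congr rfl fun r _ => ?_
          rw [← Finset.sum_filter, Finset.sum_const, Ct, nsmul_eq_mul]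
  have hrw : (1 / n) * ∑ i, s (σ i a) - (1 / K.card) * ∑ i ∈ K, s (σ i a)
      = ∑ r ∈ Finset.Icc 1 m,
          ((Ct σ Finset.univ r a : ℝ) / n - (Ct σ K r a : ℝ) / K.card) * (t r - t (r + 1)) := by
    rw [key Finset.univ, key K, Finset.mul_sum, Finset.mul_sum, ← Finset.sum_sub_distrib]
    refine Finset.sum_congr rfl fun r _ => ?_
    ring
  rw [hrw]
  calc |∑ r ∈ Finset.Icc 1 m,
          ((Ct σ Finset.univ r a : ℝ) / n - (Ct σ K r a : ℝ) / K.card) * (t r - t (r + 1))|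
      ≤ ∑ r ∈ Finset.Icc 1 m,
          |((Ct σ Finset.univ r a : ℝ) / n - (Ct σ K r a : ℝ) / K.card) * (t r - t (r + 1))| :=
        Finset.abs_sum_le_sum_abs _ _
    _ ≤ ∑ r ∈ Finset.Icc 1 m, ε * (t r - t (r + 1)) := by
        refine Finset.sum_le_sum fun r hr => ?_
        rw [abs_mul, abs_of_nonneg (hd r hr)]
        exact mul_le_mul_of_nonneg_right (hK a r hr) (hd r hr)
    _ = ε * (t 1 - t (m + 1)) := by rw [← Finset.mul_sum, tel_sum t 1 m (by omega)]
    _ = ε := by rw [ht1, htm1]; ring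
end
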